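/- arXiv:2412.05902 — 3 statements merged into one kernel-verified Lean document; each statement's English description precedes it below -/
import Mathlib

section
/- Let X be a real normed vector space and S a semigroup on X. Suppose D ⊆ X is a closed set such that (i) dist(S(t)B, D) → 0 as t → ∞ for every bounded set B ⊆ X, and (ii) inf_{u ∈ D} ‖S(t)u‖ → +∞ as t → +∞. Then every invariant set C ⊆ X with C ⊆ D is empty. -/
open Set Filter Metric Bornology

/-- `D` attracts the set `B` under the family of maps `S`: the Hausdorff semidistance
`dist(S(t)B, D) = sup_{b ∈ B} inf_{d ∈ D} ‖S(t)b − d‖` tends to `0` as `t → ∞`. -/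
def Attracts {X : Type*} [NormedAddCommGroup X] (S : ℝ → X → X) (B D : Set X) : Prop :=
  ∀ ε > (0 : ℝ), ∃ T : ℝ, ∀ t ≥ T, ∀ b ∈ B, Metric.infDist (S t b) D ≤ ε

theorem stmt0_general {X : Type*} [NormedAddCommGroup X]
    (S : ℝ → X → X)
    (D : Set X)
    (hinf : ∀ M : ℝ, ∃ T : ℝ, ∀ t ≥ T, ∀ u ∈ D, M ≤ ‖S t u‖)
    (C : Set X) (hCD : C ⊆ D)
    (hCinv : ∀ t : ℝ, 0 ≤ t → S t '' C = C) :
    C = ∅ := by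
  refine eq_empty_iff_forall_notMem.mpr fun x hx => ?_
  obtain ⟨T, hT⟩ := hinf (‖x‖ + 1)
  -- by invariance, `x` lies in `S t '' D` for every `t ≥ 0`, so `‖x‖ ≥ inf_{u ∈ D} ‖S t u‖ → ∞`
  obtain ⟨y, hyC, rfl⟩ : x ∈ S (max T 0) '' C := (hCinv _ (le_max_right T 0)).symm ▸ hx
  have hlarge := hT _ (le_max_left T 0) y (hCD hyC)
  linarith

/-- If a closed set `D` attracts all bounded sets and `inf_{u ∈ D} ‖S(t)u‖ → +∞` as
`t → +∞`, then every invariant set `C ⊆ D` is empty. -/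
theorem stmt0 {X : Type*} [NormedAddCommGroup X] [NormedSpace ℝ X]
    (S : ℝ → X → X) (hS0 : S 0 = id)
    (hSadd : ∀ t s : ℝ, 0 ≤ t → 0 ≤ s → S (t + s) = S t ∘ S s)
    (D : Set X) (hD : IsClosed D)
    (hattr : ∀ B : Set X, IsBounded B → Attracts S B D)
    (hinf : ∀ M : ℝ, ∃ T : ℝ, ∀ t ≥ T, ∀ u ∈ D, M ≤ ‖S t u‖)
    (C : Set X) (hCD : C ⊆ D)
    (hCinv : ∀ t : ℝ, 0 ≤ t → S t '' C = C) :
    C = ∅ :=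
  stmt0_general S D hinf C hCD hCinv
end

section
/- Let X be a real Hilbert space, K ⊆ X a closed linear subspace, P the orthogonal projection onto K, f ∈ K with f ≠ 0, and ζ, ω > 0. Let S be a semigroup on X satisfying, for all u₀ ∈ X and t ≥ 0: (gr) ‖(I−P)S(t)u₀‖² ≤ e^{−ζt}‖(I−P)u₀‖² + ω; (fd) ⟨f, P S(t)u₀⟩ = ⟨f, P u₀⟩ + t‖f‖²; (uk2) ‖P S(t)u₀‖² = ‖P u₀‖² + t²‖f‖⁴ + 2t‖f‖²⟨f, P u₀⟩. Then J = ∅, where J := {ξ(0) : ξ is a bounded-in-the-past complete trajectory of S}. -/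
open Set Filter Bornology
open scoped RealInnerProductSpace

/-!
Along a complete trajectory the functional `u ↦ ⟪f, P u⟫` grows like `t ‖f‖²` (this is (fd)),
so running the trajectory backwards drives it to `-∞`. A Lipschitz functional is bounded on
bounded sets, hence no trajectory can be bounded in the past.
-/

/-- The set `J` of values at time `0` of bounded-in-the-past complete trajectories of `S`. -/
def pastBoundedPoints {X : Type*} [NormedAddCommGroup X] (S : ℝ → X → X) : Set X :=
  {x | ∃ ξ : ℝ → X, (∀ t : ℝ, 0 ≤ t → ∀ s : ℝ, S t (ξ s) = ξ (t + s)) ∧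
    IsBounded (ξ '' Iic 0) ∧ ξ 0 = x}

theorem pastBoundedPoints_eq_empty_of_lipschitz_drift {X : Type*} [NormedAddCommGroup X]
    {S : ℝ → X → X} {φ : X → ℝ} {L : NNReal} (hφ : LipschitzWith L φ) {c : ℝ} (hc : 0 < c)
    (hdrift : ∀ u t, 0 ≤ t → φ (S t u) = φ u + t * c) : pastBoundedPoints S = ∅ := by
  refine eq_empty_of_forall_notMem ?_
  rintro _ ⟨ξ, hξ, hbdd, rfl⟩
  obtain ⟨B, hB⟩ := (hφ.isBounded_image hbdd).bddBelow
  have hpast : ∀ t, 0 ≤ t → B ≤ φ (ξ 0) - t * c := by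
    intro t ht
    have hstep := hdrift (ξ (-t)) t ht
    rw [hξ t ht, add_neg_cancel] at hstep
    have hlow := hB (mem_image_of_mem φ (mem_image_of_mem ξ (neg_nonpos.2 ht)))
    linarith
  have hB0 := hpast 0 le_rfl
  have hlate := hpast ((φ (ξ 0) - B + 1) / c) (div_nonneg (by linarith) hc.le)
  rw [div_mul_cancel₀ _ hc.ne'] at hlate
  linarith

theorem stmt10_general {X : Type*} [NormedAddCommGroup X] [InnerProductSpace ℝ X]
    (K : Submodule ℝ X) [CompleteSpace K]
    (f : X) (hf : f ≠ 0)
    (S : ℝ → X → X)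
    (hfd : ∀ (u₀ : X) (t : ℝ), 0 ≤ t →
      ⟪f, (K.orthogonalProjectionOnto (S t u₀) : X)⟫ =
        ⟪f, (K.orthogonalProjectionOnto u₀ : X)⟫ + t * ‖f‖ ^ 2) :
    pastBoundedPoints S = ∅ :=
  pastBoundedPoints_eq_empty_of_lipschitz_drift
    ((innerSL ℝ f).comp (K.subtypeL.comp K.orthogonalProjectionOnto)).lipschitz
    (pow_pos (norm_pos_iff.2 hf) 2) hfd

/-- Under the decay estimate (gr) for the non-Killing component and the growth
identities (fd), (uk2) for the Killing component driven by a nonzero constant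
forcing `f ∈ K`, the set `J` of bounded-in-the-past complete trajectories is empty. -/
theorem stmt10 {X : Type*} [NormedAddCommGroup X] [InnerProductSpace ℝ X] [CompleteSpace X]
    (K : Submodule ℝ X) [CompleteSpace K]
    (f : X) (hfK : f ∈ K) (hf : f ≠ 0)
    (ζ ω : ℝ) (hζ : 0 < ζ) (hω : 0 < ω)
    (S : ℝ → X → X) (hS0 : S 0 = id)
    (hSadd : ∀ t s : ℝ, 0 ≤ t → 0 ≤ s → S (t + s) = S t ∘ S s)
    (hgr : ∀ (u₀ : X) (t : ℝ), 0 ≤ t →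
      ‖S t u₀ - (K.orthogonalProjectionOnto (S t u₀) : X)‖ ^ 2 ≤
        Real.exp (-ζ * t) * ‖u₀ - (K.orthogonalProjectionOnto u₀ : X)‖ ^ 2 + ω)
    (hfd : ∀ (u₀ : X) (t : ℝ), 0 ≤ t →
      ⟪f, (K.orthogonalProjectionOnto (S t u₀) : X)⟫ =
        ⟪f, (K.orthogonalProjectionOnto u₀ : X)⟫ + t * ‖f‖ ^ 2)
    (huk2 : ∀ (u₀ : X) (t : ℝ), 0 ≤ t →
      ‖(K.orthogonalProjectionOnto (S t u₀) : X)‖ ^ 2 =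
        ‖(K.orthogonalProjectionOnto u₀ : X)‖ ^ 2 + t ^ 2 * ‖f‖ ^ 4 +
          2 * t * ‖f‖ ^ 2 * ⟪f, (K.orthogonalProjectionOnto u₀ : X)⟫) :
    pastBoundedPoints S = ∅ :=
  stmt10_general K f hf S hfd
end

section
/- Let X be a real Hilbert space, K ⊆ X a closed linear subspace, P the orthogonal projection onto K, f ∈ K, and ζ, ω > 0. Let S be a semigroup on X satisfying, for all u₀ ∈ X and t ≥ 0: (gr) ‖(I−P)S(t)u₀‖² ≤ e^{−ζt}‖(I−P)u₀‖² + ω and (fd) ⟨f, P S(t)u₀⟩ = ⟨f, P u₀⟩ + t‖f‖², with f ≠ 0. Then the closed set B := {v ∈ X : ‖(I−P)v‖ ≤ √(1/2 + ω) and ⟨f, Pv⟩ ≥ 0} is absorbing: for every bounded set B₀ ⊆ X there exists t* ≥ 0, depending only on sup_{u ∈ B₀} ‖u‖, such that S(t)B₀ ⊆ B for all t ≥ t*. -/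
/-!
Both conditions defining the absorbing set are reached at an explicit time depending only on a
bound `R ≥ ‖u‖`. Since `‖(I - P)u‖ ≤ ‖u‖ ≤ R`, once `t ≥ ζ⁻¹ log (2R² + 1)` the decaying term
`e^{-ζt} ‖(I - P)u‖²` is at most `R² / (2R² + 1) ≤ 1/2`. By Cauchy–Schwarz `⟪f, Pu⟫ ≥ -‖f‖ R`,
and the linear drift `t ‖f‖²` compensates this once `t ≥ R / ‖f‖`.
-/

open scoped RealInnerProductSpace

namespace Submodule

variable {X : Type*} [NormedAddCommGroup X] [InnerProductSpace ℝ X]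
  (K : Submodule ℝ X) [K.HasOrthogonalProjection]

theorem norm_sub_starProjection_le (u : X) : ‖u - K.starProjection u‖ ≤ ‖u‖ := by
  simpa using Kᗮ.norm_starProjection_apply_le u

theorem neg_norm_mul_norm_le_inner_starProjection (f u : X) :
    -(‖f‖ * ‖u‖) ≤ ⟪f, K.starProjection u⟫ :=
  calc -(‖f‖ * ‖u‖) ≤ -(‖f‖ * ‖K.starProjection u‖) := by
        gcongr; exact K.norm_starProjection_apply_le u
    _ ≤ ⟪f, K.starProjection u⟫ := neg_le_of_abs_le (abs_real_inner_le_norm _ _)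

end Submodule

theorem exp_neg_mul_mul_le_half {ζ R t a : ℝ} (hζ : 0 < ζ) (ha₀ : 0 ≤ a) (ha : a ≤ R ^ 2)
    (ht : ζ⁻¹ * Real.log (2 * R ^ 2 + 1) ≤ t) : Real.exp (-ζ * t) * a ≤ 1 / 2 := by
  have hpos : 0 < 2 * R ^ 2 + 1 := by positivity
  have hexp : Real.exp (-ζ * t) ≤ (2 * R ^ 2 + 1)⁻¹ := by
    rw [← Real.exp_log hpos, ← Real.exp_neg, Real.exp_le_exp]
    linarith [(inv_mul_le_iff₀ hζ).1 ht]
  calc Real.exp (-ζ * t) * a ≤ (2 * R ^ 2 + 1)⁻¹ * R ^ 2 :=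
        mul_le_mul hexp ha ha₀ (by positivity)
    _ ≤ 1 / 2 := by rw [inv_mul_le_iff₀ hpos]; linarith

theorem mul_le_mul_sq_of_div_le {a R t : ℝ} (ha : 0 ≤ a) (ht : R / a ≤ t) :
    a * R ≤ t * a ^ 2 := by
  rcases ha.eq_or_lt with rfl | ha
  · simp
  · rw [div_le_iff₀ ha] at ht
    nlinarith

/-- Entrance time of data of norm at most `R`, with `c = ‖f‖`. -/
noncomputable def absorptionTime (ζ c R : ℝ) : ℝ :=
  max (ζ⁻¹ * Real.log (2 * R ^ 2 + 1)) (R / c)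

theorem absorptionTime_nonneg {ζ : ℝ} (hζ : 0 < ζ) (c R : ℝ) : 0 ≤ absorptionTime ζ c R :=
  le_max_of_le_left <| mul_nonneg (inv_nonneg.2 hζ.le) <| Real.log_nonneg <| by
    nlinarith [sq_nonneg R]

theorem stmt11_general {X : Type*} [NormedAddCommGroup X] [InnerProductSpace ℝ X]
    (K : Submodule ℝ X) [CompleteSpace K]
    (f : X)
    (ζ ω : ℝ) (hζ : 0 < ζ)
    (S : ℝ → X → X)
    (hgr : ∀ (u₀ : X) (t : ℝ), 0 ≤ t →
      ‖S t u₀ - (K.orthogonalProjectionOnto (S t u₀) : X)‖ ^ 2 ≤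
        Real.exp (-ζ * t) * ‖u₀ - (K.orthogonalProjectionOnto u₀ : X)‖ ^ 2 + ω)
    (hfd : ∀ (u₀ : X) (t : ℝ), 0 ≤ t →
      ⟪f, (K.orthogonalProjectionOnto (S t u₀) : X)⟫ =
        ⟪f, (K.orthogonalProjectionOnto u₀ : X)⟫ + t * ‖f‖ ^ 2) :
    ∃ τ : ℝ → ℝ, (∀ R : ℝ, 0 ≤ τ R) ∧
      ∀ (R : ℝ) (B₀ : Set X), (∀ u ∈ B₀, ‖u‖ ≤ R) →
        ∀ t ≥ τ R, ∀ u ∈ B₀,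
          ‖S t u - (K.orthogonalProjectionOnto (S t u) : X)‖ ≤ Real.sqrt (1 / 2 + ω) ∧
          0 ≤ ⟪f, (K.orthogonalProjectionOnto (S t u) : X)⟫ := by
  simp only [Submodule.coe_orthogonalProjectionOnto_apply] at hgr hfd ⊢
  refine ⟨absorptionTime ζ ‖f‖, absorptionTime_nonneg hζ ‖f‖, ?_⟩
  intro R B₀ hB₀ t ht u hu
  have huR : ‖u‖ ≤ R := hB₀ u hu
  have ht₀ : 0 ≤ t := (absorptionTime_nonneg hζ _ R).trans ht
  constructor
  · apply Real.le_sqrt_of_sq_le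
    have hdecay := exp_neg_mul_mul_le_half hζ (sq_nonneg _)
      (pow_le_pow_left₀ (norm_nonneg _) ((K.norm_sub_starProjection_le u).trans huR) 2)
      ((le_max_left _ _).trans ht)
    linarith [hgr u t ht₀]
  · rw [hfd u t ht₀]
    have hdrift := mul_le_mul_sq_of_div_le (norm_nonneg f) ((le_max_right _ _).trans ht)
    have hfu : ‖f‖ * ‖u‖ ≤ ‖f‖ * R := mul_le_mul_of_nonneg_left huR (norm_nonneg f)
    linarith [K.neg_norm_mul_norm_le_inner_starProjection f u]

/-- The closed set `B = {v : ‖(I−P)v‖ ≤ √(1/2+ω), ⟨f, Pv⟩ ≥ 0}` is absorbing: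
every bounded set `B₀` enters `B` after a time `t*` depending only on a bound
`R` for the norms of the elements of `B₀`. -/
theorem stmt11 {X : Type*} [NormedAddCommGroup X] [InnerProductSpace ℝ X] [CompleteSpace X]
    (K : Submodule ℝ X) [CompleteSpace K]
    (f : X) (hfK : f ∈ K) (hf : f ≠ 0)
    (ζ ω : ℝ) (hζ : 0 < ζ) (hω : 0 < ω)
    (S : ℝ → X → X) (hS0 : S 0 = id)
    (hSadd : ∀ t s : ℝ, 0 ≤ t → 0 ≤ s → S (t + s) = S t ∘ S s)
    (hgr : ∀ (u₀ : X) (t : ℝ), 0 ≤ t →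
      ‖S t u₀ - (K.orthogonalProjectionOnto (S t u₀) : X)‖ ^ 2 ≤
        Real.exp (-ζ * t) * ‖u₀ - (K.orthogonalProjectionOnto u₀ : X)‖ ^ 2 + ω)
    (hfd : ∀ (u₀ : X) (t : ℝ), 0 ≤ t →
      ⟪f, (K.orthogonalProjectionOnto (S t u₀) : X)⟫ =
        ⟪f, (K.orthogonalProjectionOnto u₀ : X)⟫ + t * ‖f‖ ^ 2) :
    ∃ τ : ℝ → ℝ, (∀ R : ℝ, 0 ≤ τ R) ∧
      ∀ (R : ℝ) (B₀ : Set X), (∀ u ∈ B₀, ‖u‖ ≤ R) →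
        ∀ t ≥ τ R, ∀ u ∈ B₀,
          ‖S t u - (K.orthogonalProjectionOnto (S t u) : X)‖ ≤ Real.sqrt (1 / 2 + ω) ∧
          0 ≤ ⟪f, (K.orthogonalProjectionOnto (S t u) : X)⟫ :=
  stmt11_general K f ζ ω hζ S hgr hfd
end
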